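/- Let d ≥ 1, let Ω be a bounded open subset of ℝ^d and let K denote the closure of the L^∞ 1-neighborhood of Ω. Let ν = (ν^1,…,ν^d) and, for each n ≥ 1, ν_n = (ν_n^1,…,ν_n^d) be ℝ^d-valued Borel measures supported in K, such that 𝔡(ν_n, ν) → 0 as n → ∞. Suppose there exists C₁ > 0 such that Σ_{i=1}^d |ν_n^i|(K) ≤ C₁ L^d(K) for all n ≥ 1 and Σ_{i=1}^d |ν^i|(K) ≤ C₁ L^d(K), where |ν^i| denotes the total variation measure of the signed measure ν^i. Then ν_n converges weakly to ν: for every bounded continuous f : ℝ^d → ℝ and every i ∈ {1,…,d}, ∫_{ℝ^d} f dν_n^i → ∫_{ℝ^d} f dν^i. -/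

import Mathlib

open MeasureTheory Filter Set
open scoped ENNReal Topology

/-!
Testing `𝔡` against the single grid `λ = 1`, `x = 0` already shows that `𝔡(ν_n, ν) → 0` forces
`ν_n(Q) → ν(Q)` for every dyadic cube `Q`. A bounded continuous `f` is uniformly continuous on
the compact set `K`, so on a fine enough dyadic grid it is `δ`-close on `K` to a step function
`∑ c_Q 𝟙_Q`; for a measure carried by `K` this changes `∫ f` by at most `δ` times its total
variation. With the total variations of the `ν_n` uniformly bounded, `∫ f dν_n` is `O(δ)`-close
to `∑ c_Q ν_n(Q)`, which tends to `∑ c_Q ν(Q)`, itself `O(δ)`-close to `∫ f dν`.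
-/

namespace FPP

/-- `ℝ^d`, with Lebesgue measure `volume`. -/
abbrev Rd (d : ℕ) := Fin d → ℝ

/-- The Euclidean (ℓ²) norm on `Rd d`. -/
noncomputable def nrm2 {d : ℕ} (v : Rd d) : ℝ := Real.sqrt (∑ i, v i ^ 2)

/-- The translated dyadic cube `Q + x`, where `Q ∈ Δ_λ^k` is indexed by `w ∈ ℤ^d`,
`Q = 2^{-k} λ ([-1/2,1/2)^d + w)`. -/
def dyadicCube {d : ℕ} (k : ℕ) (lam : ℝ) (w : Fin d → ℤ) (x : Rd d) : Set (Rd d) :=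
  {y | ∀ i, lam * (2 : ℝ)⁻¹ ^ k * ((w i : ℝ) - 1 / 2) + x i ≤ y i ∧
            y i < lam * (2 : ℝ)⁻¹ ^ k * ((w i : ℝ) + 1 / 2) + x i}

/-- The distance `𝔡` between two `ℝ^d`-valued set functions, with values in `[0,∞]`. -/
noncomputable def ddist {d : ℕ} (ν μ : Set (Rd d) → Rd d) : ℝ≥0∞ :=
  ⨆ (x : Rd d) (_ : ∀ i, -1 ≤ x i ∧ x i < 1) (lam : ℝ) (_ : 1 ≤ lam ∧ lam ≤ 2),
    ∑' k : ℕ, (2 : ℝ≥0∞)⁻¹ ^ k *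
      ∑' w : Fin d → ℤ,
        ENNReal.ofReal (nrm2 (μ (dyadicCube k lam w x) - ν (dyadicCube k lam w x)))

/-- the restriction `ν 𝟙_A` of an `ℝ^d`-valued set function to `A` -/
def restr {d : ℕ} (ν : Set (Rd d) → Rd d) (A : Set (Rd d)) : Set (Rd d) → Rd d :=
  fun S => ν (S ∩ A)

/-- the half-open unit cube `𝔠 = [-1/2, 1/2)^d` -/
def unitCube (d : ℕ) : Set (Rd d) := {y | ∀ i, -(1 / 2 : ℝ) ≤ y i ∧ y i < 1 / 2}

/-- The `ℝ^d`-valued measure `σ ℒ^d` with density `σ` w.r.t. Lebesgue measure,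
as a set function. -/
noncomputable def densMeas {d : ℕ} (σ : Rd d → Rd d) : Set (Rd d) → Rd d :=
  fun A => ∫ y in A, σ y

/-- `K`, the closure of the `L^∞` 1-neighbourhood `V_∞(Ω,1)` of `Ω` -/
def bigK (d : ℕ) (Om : Set (Rd d)) : Set (Rd d) :=
  closure {x | ∃ y ∈ Om, ∀ i, |x i - y i| < 1}

/-- the `i`-th component `ν^i` of an `ℝ^d`-valued vector measure, as a signed measure -/
noncomputable def compMeas {d : ℕ} (ν : VectorMeasure (Rd d) (Rd d)) (i : Fin d) :
    SignedMeasure (Rd d) :=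
  ν.mapRange (Pi.evalAddMonoidHom (fun _ : Fin d => ℝ) i) (continuous_apply i)

/-- the integral `∫ f dν` of a function against a signed measure, through its Jordan
decomposition -/
noncomputable def sint {d : ℕ} (f : Rd d → ℝ) (s : SignedMeasure (Rd d)) : ℝ :=
  (∫ x, f x ∂s.toJordanDecomposition.posPart) - ∫ x, f x ∂s.toJordanDecomposition.negPart

lemma tendsto_of_forall_approx {X ι : Type*} [PseudoMetricSpace X] {l : Filter ι}
    {x : ι → X} {x₀ : X}
    (h : ∀ δ > 0, ∃ a : ι → X, ∃ a₀ : X, Tendsto a l (𝓝 a₀) ∧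
      (∀ n, dist (x n) (a n) ≤ δ) ∧ dist x₀ a₀ ≤ δ) :
    Tendsto x l (𝓝 x₀) := by
  refine Metric.tendsto_nhds.2 fun ε hε => ?_
  obtain ⟨a, a₀, ha, hxa, hx₀⟩ := h (ε / 4) (by positivity)
  filter_upwards [Metric.tendsto_nhds.1 ha (ε / 4) (by positivity)] with n hn
  calc dist (x n) x₀ ≤ dist (x n) (a n) + dist (a n) a₀ + dist a₀ x₀ := dist_triangle4 _ _ _ _
    _ < ε := by linarith [hxa n, dist_comm a₀ x₀]

lemma abs_integral_sub_sum_le {α ι : Type*} [MeasurableSpace α] {μ : Measure α}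
    [IsFiniteMeasure μ] {f : α → ℝ} (hf : Integrable f μ) {W : Finset ι} {s : ι → Set α}
    (hs : ∀ w ∈ W, MeasurableSet (s w)) (hdisj : (W : Set ι).PairwiseDisjoint s)
    (hcover : μ (⋃ w ∈ W, s w)ᶜ = 0) {c : ι → ℝ} {δ : ℝ}
    (hc : ∀ w ∈ W, ∀ᵐ x ∂μ.restrict (s w), |f x - c w| ≤ δ) :
    |∫ x, f x ∂μ - ∑ w ∈ W, c w * μ.real (s w)| ≤ δ * μ.real univ := by
  have hsplit : ∫ x, f x ∂μ = ∑ w ∈ W, ∫ x in s w, f x ∂μ := by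
    rw [← integral_biUnion_finset W hs hdisj fun w _ => hf.integrableOn,
      Measure.restrict_congr_set (ae_eq_univ.2 hcover), Measure.restrict_univ]
  have hcell : ∀ w ∈ W,
      |∫ x in s w, f x ∂μ - c w * μ.real (s w)| ≤ δ * μ.real (s w) := fun w hw => by
    rw [mul_comm (c w), ← smul_eq_mul, ← setIntegral_const,
      ← integral_sub hf.integrableOn (integrableOn_const (measure_ne_top _ _))]
    simpa only [Real.norm_eq_abs] using norm_setIntegral_le_of_norm_le_const_ae
      (f := fun x => f x - c w) (measure_lt_top _ _)
      (by simpa only [Real.norm_eq_abs] using hc w hw)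
  calc |∫ x, f x ∂μ - ∑ w ∈ W, c w * μ.real (s w)|
      ≤ ∑ w ∈ W, |∫ x in s w, f x ∂μ - c w * μ.real (s w)| := by
        rw [hsplit, ← Finset.sum_sub_distrib]
        exact Finset.abs_sum_le_sum_abs _ _
    _ ≤ ∑ w ∈ W, δ * μ.real (s w) := Finset.sum_le_sum hcell
    _ = δ * μ.real univ := by
        rw [← Finset.mul_sum, ← measureReal_biUnion_finset hdisj hs,
          measureReal_congr (ae_eq_univ.2 hcover)]

lemma totalVariation_eq_zero_of_forall_subset {α : Type*} [MeasurableSpace α]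
    {t : SignedMeasure α} {S : Set α} (hS : MeasurableSet S)
    (h : ∀ A ⊆ S, MeasurableSet A → t A = 0) : t.totalVariation S = 0 := by
  obtain ⟨i, hi, hpos, hneg, hP, hN⟩ := t.toJordanDecomposition_spec
  rw [SignedMeasure.totalVariation, Measure.add_apply, hP, hN,
    SignedMeasure.toMeasureOfZeroLE_apply _ hpos hi hS,
    SignedMeasure.toMeasureOfLEZero_apply _ hneg hi.compl hS]
  simp [h _ Set.inter_subset_right (hi.inter hS), h _ Set.inter_subset_right (hi.compl.inter hS)]

section DyadicGrid

variable {d : ℕ}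

def stdCube (k : ℕ) (w : Fin d → ℤ) : Set (Rd d) := dyadicCube k 1 w 0

noncomputable def cubeIndex (k : ℕ) (y : Rd d) : Fin d → ℤ := fun i => ⌊2 ^ k * y i + 1 / 2⌋

lemma mem_stdCube_iff {k : ℕ} {w : Fin d → ℤ} {y : Rd d} :
    y ∈ stdCube k w ↔ cubeIndex k y = w := by
  have h2k : (0 : ℝ) < 2 ^ k := by positivity
  simp only [stdCube, dyadicCube, cubeIndex, Set.mem_ofPred_eq, funext_iff, Int.floor_eq_iff,
    one_mul, Pi.zero_apply, add_zero, inv_pow, inv_mul_le_iff₀ h2k, lt_inv_mul_iff₀ h2k]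
  refine forall_congr' fun i => ?_
  constructor <;> rintro ⟨h1, h2⟩ <;> constructor <;> linarith

lemma stdCube_eq_preimage (k : ℕ) (w : Fin d → ℤ) : stdCube k w = cubeIndex k ⁻¹' {w} := by
  ext y
  exact mem_stdCube_iff

lemma mem_stdCube_cubeIndex (k : ℕ) (y : Rd d) : y ∈ stdCube k (cubeIndex k y) :=
  mem_stdCube_iff.2 rfl

lemma measurable_cubeIndex (k : ℕ) : Measurable (cubeIndex (d := d) k) :=
  measurable_pi_lambda _ fun i =>
    ((measurable_const.mul (measurable_pi_apply i)).add_const _).floor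

lemma measurableSet_stdCube (k : ℕ) (w : Fin d → ℤ) : MeasurableSet (stdCube k w) := by
  rw [stdCube_eq_preimage]
  exact measurable_cubeIndex k (measurableSet_singleton w)

lemma pairwise_disjoint_stdCube (k : ℕ) :
    Pairwise (Function.onFun Disjoint (stdCube (d := d) k)) := by
  intro w w' hne
  simp only [Function.onFun, stdCube_eq_preimage]
  exact (Set.disjoint_singleton.2 hne).preimage _

lemma dist_lt_of_mem_stdCube {k : ℕ} {w : Fin d → ℤ} {y z : Rd d}
    (hy : y ∈ stdCube k w) (hz : z ∈ stdCube k w) : dist y z < 2⁻¹ ^ k := by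
  have h2k : (0 : ℝ) < 2 ^ k := by positivity
  rw [dist_pi_lt_iff (by positivity)]
  intro i
  have hfloor := congrFun ((mem_stdCube_iff.1 hy).trans (mem_stdCube_iff.1 hz).symm) i
  have h := Int.abs_sub_lt_one_of_floor_eq_floor hfloor
  rw [add_sub_add_right_eq_sub, ← mul_sub, abs_mul, abs_of_pos h2k] at h
  rw [Real.dist_eq, inv_pow, ← one_div, lt_div_iff₀ h2k]
  linarith

lemma finite_image_cubeIndex {K : Set (Rd d)} (hK : Bornology.IsBounded K) (k : ℕ) :
    (cubeIndex k '' K).Finite := by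
  obtain ⟨R, hR⟩ := hK.exists_norm_le
  set N : ℤ := ⌈2 ^ k * R⌉
  refine (Set.finite_Icc (fun _ => -N) fun _ => N).subset ?_
  rintro _ ⟨y, hy, rfl⟩
  have h2k : (0 : ℝ) < 2 ^ k := by positivity
  have hN : 2 ^ k * R ≤ N := Int.le_ceil _
  have hy : ∀ i, |y i| ≤ R := fun i => (norm_le_pi_norm y i).trans (hR y hy)
  refine ⟨fun i => Int.le_floor.2 ?_, fun i => Int.floor_le_iff.2 ?_⟩
  · push_cast
    nlinarith [abs_le.1 (hy i)]
  · nlinarith [abs_le.1 (hy i)]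

end DyadicGrid

section CubeConvergence

variable {d : ℕ}

lemma norm_le_nrm2 (v : Rd d) : ‖v‖ ≤ nrm2 v :=
  (pi_norm_le_iff_of_nonneg (Real.sqrt_nonneg _)).2 fun i => by
    rw [Real.norm_eq_abs, ← Real.sqrt_sq_eq_abs]
    exact Real.sqrt_le_sqrt (Finset.single_le_sum (fun j _ => sq_nonneg (v j)) (Finset.mem_univ i))

lemma ofReal_nrm2_sub_le_ddist (ν μ : Set (Rd d) → Rd d) (k : ℕ) (w : Fin d → ℤ) :
    ENNReal.ofReal (nrm2 (μ (stdCube k w) - ν (stdCube k w))) ≤ 2 ^ k * ddist ν μ := by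
  have h0 : ∀ i, -1 ≤ (0 : Rd d) i ∧ (0 : Rd d) i < 1 := fun _ => by norm_num
  have hterm : (2 : ℝ≥0∞)⁻¹ ^ k * ENNReal.ofReal (nrm2 (μ (stdCube k w) - ν (stdCube k w)))
      ≤ ddist ν μ :=
    le_trans (mul_le_mul_right (ENNReal.le_tsum w) _) <| (ENNReal.le_tsum k).trans <|
      le_iSup₂_of_le (0 : Rd d) h0 <| le_iSup₂_of_le (1 : ℝ) ⟨le_rfl, one_le_two⟩ le_rfl
  calc ENNReal.ofReal (nrm2 (μ (stdCube k w) - ν (stdCube k w)))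
      = 2 ^ k * ((2 : ℝ≥0∞)⁻¹ ^ k * ENNReal.ofReal (nrm2 (μ (stdCube k w) - ν (stdCube k w)))) := by
        rw [← mul_assoc, ← mul_pow, ENNReal.mul_inv_cancel two_ne_zero ENNReal.ofNat_ne_top,
          one_pow, one_mul]
    _ ≤ 2 ^ k * ddist ν μ := by gcongr

lemma tendsto_stdCube_of_tendsto_ddist {ι : Type*} {l : Filter ι} {μs : ι → Set (Rd d) → Rd d}
    {μ : Set (Rd d) → Rd d} (h : Tendsto (fun n => ddist (μs n) μ) l (𝓝 0)) (k : ℕ)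
    (w : Fin d → ℤ) : Tendsto (fun n => μs n (stdCube k w)) l (𝓝 (μ (stdCube k w))) := by
  rw [tendsto_iff_edist_tendsto_0]
  have hlim : Tendsto (fun n => 2 ^ k * ddist (μs n) μ) l (𝓝 0) := by
    simpa using ENNReal.Tendsto.const_mul h (Or.inr (ENNReal.pow_ne_top ENNReal.ofNat_ne_top))
  refine tendsto_of_tendsto_of_tendsto_of_le_of_le tendsto_const_nhds hlim (fun _ => zero_le)
    fun n => ?_
  rw [edist_dist, dist_comm, dist_eq_norm]
  exact (ENNReal.ofReal_le_ofReal (norm_le_nrm2 _)).trans (ofReal_nrm2_sub_le_ddist _ _ k w)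

end CubeConvergence

section WeakConvergence

variable {d : ℕ}

lemma abs_sint_sub_sum_le {ι : Type*} {t : SignedMeasure (Rd d)} {f : Rd d → ℝ}
    (hf : Integrable f t.totalVariation) {W : Finset ι} {s : ι → Set (Rd d)}
    (hs : ∀ w ∈ W, MeasurableSet (s w)) (hdisj : (W : Set ι).PairwiseDisjoint s)
    (hcover : t.totalVariation (⋃ w ∈ W, s w)ᶜ = 0) {c : ι → ℝ} {δ : ℝ}
    (hc : ∀ w ∈ W, ∀ᵐ x ∂t.totalVariation.restrict (s w), |f x - c w| ≤ δ) :
    |sint f t - ∑ w ∈ W, c w * t (s w)| ≤ δ * t.totalVariation.real univ := by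
  have hpart : ∀ μ : Measure (Rd d), [IsFiniteMeasure μ] → μ ≤ t.totalVariation →
      |∫ x, f x ∂μ - ∑ w ∈ W, c w * μ.real (s w)| ≤ δ * μ.real univ := fun μ _ hμ =>
    abs_integral_sub_sum_le (hf.mono_measure hμ) hs hdisj
      (Measure.absolutelyContinuous_of_le hμ hcover) fun w hw =>
        (Measure.absolutelyContinuous_of_le (Measure.restrict_mono subset_rfl hμ)).ae_le (hc w hw)
  rw [sint]
  set P := t.toJordanDecomposition.posPart
  set N := t.toJordanDecomposition.negPart
  have hP := hpart P (Measure.le_add_right le_rfl)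
  have hN := hpart N (Measure.le_add_left le_rfl)
  have hsum : ∑ w ∈ W, c w * t (s w)
      = ∑ w ∈ W, c w * P.real (s w) - ∑ w ∈ W, c w * N.real (s w) := by
    rw [← Finset.sum_sub_distrib]
    refine Finset.sum_congr rfl fun w hw => ?_
    rw [t.apply_eq_posPart_real_sub_negPart_real (hs w hw), mul_sub]
  have htv : t.totalVariation.real univ = P.real univ + N.real univ := measureReal_add_apply
  rw [hsum, htv, mul_add]
  calc _ = |(∫ x, f x ∂P - ∑ w ∈ W, c w * P.real (s w))
        - (∫ x, f x ∂N - ∑ w ∈ W, c w * N.real (s w))| := by congr 1; ring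
    _ ≤ _ := (abs_sub _ _).trans (add_le_add hP hN)

lemma exists_stdCube_oscillation_le {K : Set (Rd d)} (hK : IsCompact K) {f : Rd d → ℝ}
    (hf : ContinuousOn f K) {δ : ℝ} (hδ : 0 < δ) :
    ∃ k : ℕ, ∃ c : (Fin d → ℤ) → ℝ, ∀ w, ∀ y ∈ stdCube k w ∩ K, |f y - c w| ≤ δ := by
  obtain ⟨η, hη, hfη⟩ := Metric.uniformContinuousOn_iff.1
    (hK.uniformContinuousOn_of_continuous hf) δ hδ
  obtain ⟨k, hk⟩ := exists_pow_lt_of_lt_one hη (by norm_num : (2 : ℝ)⁻¹ < 1)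
  have hc : ∀ w, ∃ c, ∀ y ∈ stdCube k w ∩ K, |f y - c| ≤ δ := fun w => by
    rcases (stdCube k w ∩ K).eq_empty_or_nonempty with hempty | ⟨z, hz⟩
    · exact ⟨0, by simp [hempty]⟩
    · exact ⟨f z, fun y hy =>
        (hfη y hy.2 z hz.2 ((dist_lt_of_mem_stdCube hy.1 hz.1).trans hk)).le⟩
  choose c hc using hc
  exact ⟨k, c, hc⟩

lemma abs_sint_sub_sum_stdCube_le {K : Set (Rd d)} (hK : Bornology.IsBounded K)
    {t : SignedMeasure (Rd d)} (ht : t.totalVariation Kᶜ = 0) {f : Rd d → ℝ}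
    (hf : Integrable f t.totalVariation) {k : ℕ} {c : (Fin d → ℤ) → ℝ} {δ : ℝ}
    (hc : ∀ w, ∀ y ∈ stdCube k w ∩ K, |f y - c w| ≤ δ) :
    |sint f t - ∑ w ∈ (finite_image_cubeIndex hK k).toFinset, c w * t (stdCube k w)|
      ≤ δ * t.totalVariation.real univ := by
  have hK_ae : ∀ᵐ x ∂t.totalVariation, x ∈ K := ht
  refine abs_sint_sub_sum_le hf (fun w _ => measurableSet_stdCube k w)
    ((pairwise_disjoint_stdCube k).set_pairwise _) (measure_mono_null ?_ ht) fun w _ => ?_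
  · refine Set.compl_subset_compl.2 fun y hy => ?_
    exact Set.mem_biUnion ((Set.Finite.mem_toFinset _).2 ⟨y, hy, rfl⟩) (mem_stdCube_cubeIndex k y)
  · filter_upwards [ae_restrict_of_ae hK_ae, ae_restrict_mem (measurableSet_stdCube k w)]
      with y hyK hyQ
    exact hc w y ⟨hyQ, hyK⟩

theorem tendsto_sint_of_tendsto_stdCube {ι : Type*} {l : Filter ι} {K : Set (Rd d)}
    (hK : IsCompact K) {t : SignedMeasure (Rd d)} {ts : ι → SignedMeasure (Rd d)}
    (ht : t.totalVariation Kᶜ = 0) (hts : ∀ n, (ts n).totalVariation Kᶜ = 0) {M : ℝ}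
    (hM : ∀ n, (ts n).totalVariation.real univ ≤ M)
    (hcube : ∀ k w, Tendsto (fun n => ts n (stdCube k w)) l (𝓝 (t (stdCube k w))))
    {f : Rd d → ℝ} (hf : Continuous f) {B : ℝ} (hB : ∀ x, |f x| ≤ B) :
    Tendsto (fun n => sint f (ts n)) l (𝓝 (sint f t)) := by
  refine tendsto_of_forall_approx fun δ hδ => ?_
  set T := max M (t.totalVariation.real univ)
  have hT : 0 ≤ T := le_max_of_le_right measureReal_nonneg
  obtain ⟨k, c, hc⟩ := exists_stdCube_oscillation_le hK hf.continuousOn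
    (div_pos hδ (by linarith : 0 < T + 1))
  have herr : ∀ u : SignedMeasure (Rd d), u.totalVariation Kᶜ = 0 →
      u.totalVariation.real univ ≤ T →
      dist (sint f u) (∑ w ∈ (finite_image_cubeIndex hK.isBounded k).toFinset,
        c w * u (stdCube k w)) ≤ δ := fun u hu huT => by
    have hint : Integrable f u.totalVariation :=
      .of_bound hf.aestronglyMeasurable B
        (ae_of_all _ fun x => (Real.norm_eq_abs _).trans_le (hB x))
    calc _ ≤ δ / (T + 1) * u.totalVariation.real univ :=
          abs_sint_sub_sum_stdCube_le hK.isBounded hu hint hc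
      _ ≤ δ / (T + 1) * (T + 1) := by gcongr; linarith
      _ = δ := div_mul_cancel₀ _ (by linarith)
  exact ⟨_, _, tendsto_finsetSum _ fun w _ => (hcube k w).const_mul (c w),
    fun n => herr _ (hts n) ((hM n).trans (le_max_left _ _)), herr _ ht (le_max_right _ _)⟩

end WeakConvergence

lemma isCompact_bigK {d : ℕ} {Om : Set (Rd d)} (hOm : Bornology.IsBounded Om) :
    IsCompact (bigK d Om) := by
  have hsub : {x : Rd d | ∃ y ∈ Om, ∀ i, |x i - y i| < 1} ⊆ Metric.thickening 1 Om :=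
    fun x ⟨y, hy, hxy⟩ => Metric.mem_thickening_iff.2
      ⟨y, hy, (dist_pi_lt_iff one_pos).2 fun i => by rw [Real.dist_eq]; exact hxy i⟩
  exact (hOm.thickening.subset hsub).isCompact_closure

lemma compMeas_apply {d : ℕ} (ν : VectorMeasure (Rd d) (Rd d)) (i : Fin d) (A : Set (Rd d)) :
    compMeas ν i A = ν A i :=
  VectorMeasure.mapRange_apply _ _

lemma totalVariation_compMeas_compl_eq_zero {d : ℕ} {ν : VectorMeasure (Rd d) (Rd d)}
    {K : Set (Rd d)} (hK : MeasurableSet K)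
    (h : ∀ A : Set (Rd d), MeasurableSet A → A ∩ K = ∅ → ν A = 0) (i : Fin d) :
    (compMeas ν i).totalVariation Kᶜ = 0 :=
  totalVariation_eq_zero_of_forall_subset hK.compl fun A hA hAm => by
    rw [compMeas_apply, h A hAm (Set.subset_compl_iff_disjoint_right.1 hA).inter_eq, Pi.zero_apply]

theorem statement9_general
    (d : ℕ)
    (Om : Set (Rd d)) (hObd : Bornology.IsBounded Om)
    (ν : VectorMeasure (Rd d) (Rd d)) (νseq : ℕ → VectorMeasure (Rd d) (Rd d))
    (hsupp : ∀ A : Set (Rd d), MeasurableSet A → A ∩ bigK d Om = ∅ → ν A = 0)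
    (hsuppn : ∀ n, ∀ A : Set (Rd d), MeasurableSet A → A ∩ bigK d Om = ∅ → νseq n A = 0)
    (hconv : Filter.Tendsto (fun n => ddist (fun A => νseq n A) (fun A => ν A))
      Filter.atTop (nhds 0))
    (C₁ : ℝ)
    (hTVn : ∀ n, (∑ i : Fin d, (compMeas (νseq n) i).totalVariation (bigK d Om))
      ≤ ENNReal.ofReal C₁ * volume (bigK d Om)) :
    ∀ f : Rd d → ℝ, Continuous f → (∃ B : ℝ, ∀ x, |f x| ≤ B) →
      ∀ i : Fin d,
        Filter.Tendsto (fun n => sint f (compMeas (νseq n) i)) Filter.atTop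
          (nhds (sint f (compMeas ν i))) := by
  intro f hf ⟨B, hB⟩ i
  have hK := isCompact_bigK hObd
  have hKm := hK.isClosed.measurableSet
  have hsuppnK := fun n => totalVariation_compMeas_compl_eq_zero hKm (hsuppn n) i
  refine tendsto_sint_of_tendsto_stdCube hK (totalVariation_compMeas_compl_eq_zero hKm hsupp i)
    hsuppnK (M := (ENNReal.ofReal C₁ * volume (bigK d Om)).toReal) (fun n => ?_)
    (fun k w => ?_) hf hB
  · rw [← measureReal_congr (ae_eq_univ.2 (hsuppnK n))]
    exact ENNReal.toReal_mono (ENNReal.mul_ne_top ENNReal.ofReal_ne_top hK.measure_lt_top.ne)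
      ((Finset.single_le_sum (fun j _ => zero_le) (Finset.mem_univ i)).trans (hTVn n))
  · simp only [compMeas_apply]
    exact ((continuous_apply i).tendsto _).comp (tendsto_stdCube_of_tendsto_ddist hconv k w)

/-- Lemma 2.1.  Convergence in the distance `𝔡` of `ℝ^d`-valued measures
supported in `K = closure V_∞(Ω,1)`, uniformly bounded in total variation norm, implies
weak convergence. -/
theorem statement9
    (d : ℕ) (hd : 1 ≤ d)
    (Om : Set (Rd d)) (hOopen : IsOpen Om) (hObd : Bornology.IsBounded Om)
    (ν : VectorMeasure (Rd d) (Rd d)) (νseq : ℕ → VectorMeasure (Rd d) (Rd d))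
    (hsupp : ∀ A : Set (Rd d), MeasurableSet A → A ∩ bigK d Om = ∅ → ν A = 0)
    (hsuppn : ∀ n, ∀ A : Set (Rd d), MeasurableSet A → A ∩ bigK d Om = ∅ → νseq n A = 0)
    (hconv : Filter.Tendsto (fun n => ddist (fun A => νseq n A) (fun A => ν A))
      Filter.atTop (nhds 0))
    (C₁ : ℝ) (hC₁ : 0 < C₁)
    (hTVn : ∀ n, (∑ i : Fin d, (compMeas (νseq n) i).totalVariation (bigK d Om))
      ≤ ENNReal.ofReal C₁ * volume (bigK d Om))
    (hTV : (∑ i : Fin d, (compMeas ν i).totalVariation (bigK d Om))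
      ≤ ENNReal.ofReal C₁ * volume (bigK d Om)) :
    ∀ f : Rd d → ℝ, Continuous f → (∃ B : ℝ, ∀ x, |f x| ≤ B) →
      ∀ i : Fin d,
        Filter.Tendsto (fun n => sint f (compMeas (νseq n) i)) Filter.atTop
          (nhds (sint f (compMeas ν i))) :=
  statement9_general d Om hObd ν νseq hsupp hsuppn hconv C₁ hTVn

end FPP
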